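/- arXiv:1510.01556 — 2 statements merged into one kernel-verified Lean document; each statement's English description precedes it below -/
import Mathlib

section
/- Let p be a prime and n a nonnegative integer. Then n can be written uniquely as n = Σ_{i=0}^{l} n_i p^i with p-1 ≤ n_i ≤ 2p-2 for all i < l and 0 ≤ n_l ≤ p-1. -/
/-!
The lowest digit of an adapted expansion of `n` is forced: it is `n` itself when `n < p`, and
otherwise the unique number in `[p - 1, 2p - 2]` congruent to `n` modulo `p`. Removing it leaves
an adapted expansion of `(n - n₀) / p`, which gives uniqueness digit by digit and existence by
strong induction on `n`.
-/

open Finset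

section

variable {p l l' n : ℕ} {f g : ℕ → ℕ}

def IsAdaptedExpansion (p : ℕ) (f : ℕ → ℕ) (l n : ℕ) : Prop :=
  (∀ i < l, p - 1 ≤ f i ∧ f i ≤ 2 * p - 2) ∧
  f l ≤ p - 1 ∧
  (∀ i > l, f i = 0) ∧
  n = ∑ i ∈ range (l + 1), f i * p ^ i

theorem isAdaptedExpansion_zero_iff :
    IsAdaptedExpansion p f 0 n ↔ f 0 ≤ p - 1 ∧ (∀ i > 0, f i = 0) ∧ n = f 0 := by
  simp [IsAdaptedExpansion]

theorem isAdaptedExpansion_succ_iff :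
    IsAdaptedExpansion p f (l + 1) n ↔ (p - 1 ≤ f 0 ∧ f 0 ≤ 2 * p - 2) ∧
      ∃ m, IsAdaptedExpansion p (fun i => f (i + 1)) l m ∧ n = f 0 + p * m := by
  have hsum : ∑ i ∈ range (l + 1 + 1), f i * p ^ i =
      f 0 + p * ∑ i ∈ range (l + 1), f (i + 1) * p ^ i := by
    rw [sum_range_succ', mul_sum, add_comm]
    simp only [pow_succ, pow_zero, mul_one]
    congr 1
    exact sum_congr rfl fun i _ => by ring
  have hvanish : (∀ i > l + 1, f i = 0) ↔ ∀ i > l, f (i + 1) = 0 :=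
    ⟨fun h i hi => h (i + 1) (by omega), fun h i hi => by
      obtain ⟨j, rfl⟩ := Nat.exists_eq_succ_of_ne_zero (by omega : i ≠ 0)
      exact h j (by omega)⟩
  simp only [IsAdaptedExpansion, Nat.forall_lt_succ_left, hsum, hvanish]
  constructor
  · rintro ⟨⟨hhead, hdigits⟩, hlast, hvanish, rfl⟩
    exact ⟨hhead, _, ⟨hdigits, hlast, hvanish, rfl⟩, rfl⟩
  · rintro ⟨hhead, m, ⟨hdigits, hlast, hvanish, rfl⟩, rfl⟩
    exact ⟨⟨hhead, hdigits⟩, hlast, hvanish, rfl⟩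

theorem IsAdaptedExpansion.exists_eq_head_add_mul (hf : IsAdaptedExpansion p f l n) :
    ∃ m, n = f 0 + p * m := by
  cases l with
  | zero => exact ⟨0, by simpa using (isAdaptedExpansion_zero_iff.1 hf).2.2⟩
  | succ l =>
    obtain ⟨-, m, -, hm⟩ := isAdaptedExpansion_succ_iff.1 hf
    exact ⟨m, hm⟩

theorem IsAdaptedExpansion.head_mem_Icc (hf : IsAdaptedExpansion p f l n) (hn : p ≤ n) :
    f 0 ∈ Set.Icc (p - 1) (2 * p - 2) := by
  cases l with
  | zero =>
    have := isAdaptedExpansion_zero_iff.1 hf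
    simp only [Set.mem_Icc]
    omega
  | succ l => exact (isAdaptedExpansion_succ_iff.1 hf).1

theorem IsAdaptedExpansion.tail (hp : 0 < p) (hf : IsAdaptedExpansion p f l n) :
    IsAdaptedExpansion p (fun i => f (i + 1)) (l - 1) ((n - f 0) / p) := by
  cases l with
  | zero =>
    -- here `l - 1 = 0` and the tail is the zero expansion of `0`
    obtain ⟨-, hvanish, hn⟩ := isAdaptedExpansion_zero_iff.1 hf
    refine isAdaptedExpansion_zero_iff.2 ⟨?_, fun i _ => hvanish _ i.succ_pos, ?_⟩ <;>
      simp [hvanish 1 one_pos, hn]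
  | succ l =>
    obtain ⟨-, m, hm, rfl⟩ := isAdaptedExpansion_succ_iff.1 hf
    simpa [Nat.mul_div_cancel_left m hp] using hm

theorem IsAdaptedExpansion.head_eq (hp : 0 < p)
    (hf : IsAdaptedExpansion p f l n) (hg : IsAdaptedExpansion p g l' n) : f 0 = g 0 := by
  obtain ⟨m, hm⟩ := hf.exists_eq_head_add_mul
  obtain ⟨m', hm'⟩ := hg.exists_eq_head_add_mul
  have hmod : f 0 ≡ g 0 [MOD p] := by
    rw [Nat.ModEq, ← Nat.add_mul_mod_self_left (f 0) p m, ← hm, hm',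
      Nat.add_mul_mod_self_left]
  rcases lt_or_ge n p with hn | hn
  · exact hmod.eq_of_lt_of_lt (by omega) (by omega)
  · have hf0 := hf.head_mem_Icc hn
    have hg0 := hg.head_mem_Icc hn
    simp only [Set.mem_Icc] at hf0 hg0
    exact hmod.eq_of_abs_lt (abs_sub_lt_iff.2 ⟨by omega, by omega⟩)

theorem IsAdaptedExpansion.apply_eq (hp : 0 < p)
    (hf : IsAdaptedExpansion p f l n) (hg : IsAdaptedExpansion p g l' n) (i : ℕ) :
    f i = g i := by
  induction i generalizing f g l l' n with
  | zero => exact hf.head_eq hp hg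
  | succ i ih => exact ih (hf.tail hp) (hf.head_eq hp hg ▸ hg.tail hp)

theorem exists_isAdaptedExpansion (hp : 2 ≤ p) (n : ℕ) :
    ∃ f l, IsAdaptedExpansion p f l n := by
  induction n using Nat.strong_induction_on with
  | _ n ih =>
  rcases lt_or_ge n p with hn | hn
  · exact ⟨Pi.single 0 n, 0, isAdaptedExpansion_zero_iff.2
      ⟨by simp only [Pi.single_eq_same]; omega, fun i hi => by simp [hi.ne'], by simp⟩⟩
  · obtain ⟨r, m, hr, hnrm⟩ : ∃ r m, r < p ∧ n - (p - 1) = r + p * m :=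
      ⟨_, _, Nat.mod_lt _ (by omega), (Nat.mod_add_div _ _).symm⟩
    have hm : m ≤ p * m := Nat.le_mul_of_pos_left m (by omega)
    obtain ⟨g, l, hg⟩ := ih m (by omega)
    refine ⟨fun | 0 => p - 1 + r | i + 1 => g i, l + 1,
      isAdaptedExpansion_succ_iff.2 ⟨⟨?_, ?_⟩, m, hg, ?_⟩⟩ <;> dsimp only <;> omega

end

/-- Adapted base-`p` expansion (Erdmann-Henke): for a prime `p` and `n : ℕ`, there is a
unique finitely supported digit sequence `f` such that, for some `l`, the digits satisfy
`p - 1 ≤ f i ≤ 2p - 2` for `i < l`, `f l ≤ p - 1`, `f i = 0` for `i > l`, and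
`n = ∑_{i=0}^{l} f i * p^i`. -/
theorem adapted_base_p_expansion (p : ℕ) (hp : p.Prime) (n : ℕ) :
    ∃! f : ℕ →₀ ℕ, ∃ l : ℕ,
      (∀ i < l, p - 1 ≤ f i ∧ f i ≤ 2 * p - 2) ∧
      f l ≤ p - 1 ∧
      (∀ i > l, f i = 0) ∧
      n = ∑ i ∈ Finset.range (l + 1), f i * p ^ i := by
  obtain ⟨f, l, hf⟩ := exists_isAdaptedExpansion hp.two_le n
  have hsupport : ∀ i, f i ≠ 0 → i ∈ range (l + 1) := by
    obtain ⟨-, -, hvanish, -⟩ := hf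
    exact fun i hi => mem_range.2 (lt_of_not_ge fun h => hi (hvanish i h))
  exact ⟨Finsupp.onFinset _ f hsupport, ⟨l, hf⟩, fun g ⟨l', hg⟩ =>
    Finsupp.ext (IsAdaptedExpansion.apply_eq hp.pos hg hf)⟩
end

section
/- Let (W,S) be a Coxeter system, x ∈ W, and s ∈ S with sx < x. Suppose b is an element of the Hecke algebra with b = b_x^{KL} + Σ_{y<x} m_y b_y^{KL} where m_y ∈ Z_{≥0}[v,v^{-1}], m_{sx} = 0, and b_s·b = (v+v^{-1})·b' for some nonnegative combination b' of the b_y^{KL}. If additionally b_s·b evaluated via the KL multiplication formula yields (v+v^{-1})b_x^{KL} plus nonnegative terms, and evaluation at v = 1 acting on the sign/trivial module kills all extra terms, then b_s·b = (v+v^{-1})·b. -/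
open LaurentPolynomial

/-- A Laurent polynomial with nonnegative coefficients, i.e. an element of `ℤ_{≥0}[v,v⁻¹]`. -/
def IsNonnegLaurent (q : LaurentPolynomial ℤ) : Prop :=
  ∃ f : ℤ →₀ ℕ, q = f.sum fun n c => LaurentPolynomial.C (c : ℤ) * LaurentPolynomial.T n

lemma IsNonnegLaurent.exists_eval {H : Type*} [Ring H] [Algebra (LaurentPolynomial ℤ) H]
    (ε : H →+ ℤ) (hε_semi : ∀ (n : ℤ) (z : H), ε ((T n : LaurentPolynomial ℤ) • z) = ε z)
    {q : LaurentPolynomial ℤ} (hq : IsNonnegLaurent q) :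
    ∃ n : ℕ, (∀ z : H, ε (q • z) = n * ε z) ∧ (n = 0 → q = 0) := by
  obtain ⟨f, rfl⟩ := hq
  refine ⟨f.sum fun _ c => c, fun z => ?_, fun hn => ?_⟩
  · rw [Finsupp.sum, Finsupp.sum, Finset.sum_smul, map_sum, Nat.cast_sum, Finset.sum_mul]
    refine Finset.sum_congr rfl fun k _ => ?_
    have : (LaurentPolynomial.C ((f k : ℤ)) * T k) • z
        = (f k : ℤ) • ((T k : LaurentPolynomial ℤ) • z) := by
      rw [mul_smul, eq_intCast LaurentPolynomial.C (f k : ℤ), Int.cast_smul_eq_zsmul]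
    rw [this, map_zsmul, hε_semi, smul_eq_mul]
  · have hall : ∀ k ∈ f.support, f k = 0 :=
      (Finset.sum_eq_zero_iff).mp hn
    have : f = 0 := by
      ext k
      by_cases hk : k ∈ f.support
      · exact hall k hk
      · simpa using Finsupp.notMem_support_iff.mp hk
    simp [this, Finsupp.sum]

/-- Abstract form of the key step in the multiplication formula for the `p`-canonical
basis: let `sx < x` and `b = b_x^{KL} + ∑_{y<x} m_y b_y^{KL}` with nonnegative `m_y` and
`m_{sx} = 0`. If `b_s · b = (v+v⁻¹) • b + ∑_{y<x} d_y b_y^{KL}` with nonnegative `d_y`,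
and evaluation `ε` at `v = 1` on the trivial module (so `ε(b_s · z) = 2 ε(z)` and
`ε(b_y^{KL}) > 0`) kills all extra terms, then `b_s · b = (v+v⁻¹) • b`. -/
theorem pcanonical_multiplication_step {W H : Type*} [Group W] [Ring H]
    [Algebra (LaurentPolynomial ℤ) H]
    (lt : W → W → Prop) (bKL : W → H)
    (hKL_indep : LinearIndependent (LaurentPolynomial ℤ) bKL)
    (s x : W) (hsx : lt (s * x) x)
    (bs b : H)
    (m : W →₀ LaurentPolynomial ℤ)
    (hm_supp : ∀ y ∈ m.support, lt y x)
    (hm_nonneg : ∀ y : W, IsNonnegLaurent (m y))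
    (hm_sx : m (s * x) = 0)
    (hb : b = bKL x + m.sum (fun y q => q • bKL y))
    (d : W →₀ LaurentPolynomial ℤ)
    (hd_supp : ∀ y ∈ d.support, lt y x)
    (hd_nonneg : ∀ y : W, IsNonnegLaurent (d y))
    (hexp : bs * b = ((T 1 + T (-1) : LaurentPolynomial ℤ)) • b +
      d.sum (fun y q => q • bKL y))
    (ε : H →+ ℤ)
    (hε_semi : ∀ (n : ℤ) (z : H), ε ((T n : LaurentPolynomial ℤ) • z) = ε z)
    (hε_bs : ∀ z : H, ε (bs * z) = 2 * ε z)
    (hε_pos : ∀ y : W, 0 < ε (bKL y)) :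
    bs * b = ((T 1 + T (-1) : LaurentPolynomial ℤ)) • b := by
  -- choose evaluation constants for each d y
  choose n hn hn0 using fun y => (hd_nonneg y).exists_eval ε hε_semi
  -- apply ε to hexp
  have hsum : ε (d.sum fun y q => q • bKL y) = 0 := by
    have h1 := congrArg ε hexp
    rw [hε_bs, map_add, add_smul, map_add, hε_semi, hε_semi] at h1
    omega
  have hsum' : ∑ y ∈ d.support, (n y : ℤ) * ε (bKL y) = 0 := by
    rw [← hsum, Finsupp.sum, map_sum]
    exact Finset.sum_congr rfl fun y _ => (hn y (bKL y)).symm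
  have hterm : ∀ y ∈ d.support, (n y : ℤ) * ε (bKL y) = 0 := by
    refine (Finset.sum_eq_zero_iff_of_nonneg fun y _ => ?_).mp hsum'
    exact mul_nonneg (Int.natCast_nonneg _) (le_of_lt (hε_pos y))
  have hd0 : d.support = ∅ := by
    rw [Finset.eq_empty_iff_forall_notMem]
    intro y hy
    have := hterm y hy
    have hny : n y = 0 := by
      rcases mul_eq_zero.mp this with h | h
      · exact_mod_cast h
      · exact absurd h (ne_of_gt (hε_pos y))
    exact Finsupp.mem_support_iff.mp hy (hn0 y hny)
  have : d.sum (fun y q => q • bKL y) = 0 := by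
    rw [Finsupp.sum, hd0, Finset.sum_empty]
  rw [hexp, this, add_zero]
end
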